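/- arXiv:1309.6557 — 2 statements merged into one kernel-verified Lean document; each statement's English description precedes it below -/
import Mathlib

section
/- For a prime p ≥ 3 and an invertible symmetric n×n matrix S over Z_p, for any vector m ∈ Z_p^n, the absolute value of ∑_{l ∈ Z_p^n} ω^(lᵀ S l + mᵀ l) equals √(p^n), where ω = e^(2πi/p). -/
/-!
Write `ψ` for the additive character `x ↦ ω ^ x.val` and `Q l = lᵀ S l + mᵀ l`. Expanding
`|∑ ψ (Q l)|² = ∑_{d, x} ψ (Q (x + d) - Q x)` and using `Q (x + d) - Q x = Q d + xᵀ (S + Sᵀ) d`,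
the inner sum over `x` is a full character sum of the linear form `x ↦ xᵀ (S + Sᵀ) d`. It
vanishes unless `(S + Sᵀ) d = 0`, i.e. unless `d = 0` since `S + Sᵀ = 2 S` is invertible
for odd `p`. Only `d = 0` survives, contributing `p ^ n`.
-/

open Matrix Finset

namespace AddChar

variable {K : Type*} [RCLike K]

theorem norm_sum_sq_eq_sum_sum {G V : Type*} [AddCommGroup G] [Finite G] [AddCommGroup V]
    [Fintype V] (ψ : AddChar G K) (f : V → G) :
    (‖∑ x, ψ (f x)‖ : K) ^ 2 = ∑ d, ∑ x, ψ (f (x + d) - f x) := by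
  rw [← RCLike.mul_conj, map_sum, sum_mul_sum, sum_comm]
  conv_rhs => rw [sum_comm]
  refine sum_congr rfl fun x _ => ?_
  rw [← Equiv.sum_comp (Equiv.addLeft x)]
  simp only [Equiv.coe_addLeft, ← map_neg_eq_conj, ← map_add_eq_mul, sub_eq_add_neg]

variable {ι R : Type*} [Fintype ι] [DecidableEq ι] [CommRing R] [Fintype R]

theorem sum_dotProduct_eq_zero {ψ : AddChar R K} (hψ : ψ.IsPrimitive) {v : ι → R}
    (hv : v ≠ 0) : ∑ b : ι → R, ψ (b ⬝ᵥ v) = 0 := by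
  obtain ⟨j, hj⟩ := Function.ne_iff.mp hv
  obtain ⟨x, hx⟩ := ne_one_iff.mp (hψ hj)
  let φ : AddChar (ι → R) K :=
    ψ.compAddMonoidHom (AddMonoidHom.mk' (· ⬝ᵥ v) (add_dotProduct · · v))
  have hφ : φ ≠ 1 := ne_one_iff.mpr ⟨Pi.single j x, by
    simpa [φ, single_dotProduct, mul_comm] using hx⟩
  exact sum_eq_zero_of_ne_one hφ

theorem norm_sum_quadratic_sq {ψ : AddChar R K} (hψ : ψ.IsPrimitive) {S : Matrix ι ι R}
    (hS : IsUnit (S + Sᵀ).det) (m : ι → R) :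
    ‖∑ l : ι → R, ψ (l ⬝ᵥ S *ᵥ l + m ⬝ᵥ l)‖ ^ 2 = (Fintype.card R : ℝ) ^ Fintype.card ι := by
  set Q : (ι → R) → R := fun l ↦ l ⬝ᵥ S *ᵥ l + m ⬝ᵥ l
  have hQ (x d : ι → R) : Q (x + d) - Q x = Q d + x ⬝ᵥ (S + Sᵀ) *ᵥ d := by
    simp only [Q, add_mulVec, mulVec_add, dotProduct_add, add_dotProduct,
      dotProduct_transpose_mulVec S x d]
    ring
  have hinner {d : ι → R} (hd : d ≠ 0) : ∑ x : ι → R, ψ (x ⬝ᵥ (S + Sᵀ) *ᵥ d) = 0 :=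
    sum_dotProduct_eq_zero hψ fun h ↦
      hd (eq_zero_of_det_mem_nonZeroDivisors_of_mulVec_eq_zero hS.mem_nonZeroDivisors h)
  apply RCLike.ofReal_injective (K := K)
  push_cast
  rw [norm_sum_sq_eq_sum_sum ψ Q]
  simp_rw [hQ, map_add_eq_mul, ← mul_sum]
  rw [Fintype.sum_eq_single 0 fun d hd ↦ by rw [hinner hd, mul_zero]]
  simp [Q]

end AddChar

theorem weil_sum_abs_odd (p n : ℕ) [hp : Fact p.Prime] (hp3 : 3 ≤ p)
    (S : Matrix (Fin n) (Fin n) (ZMod p)) (hS : S.IsSymm) (hdet : S.det ≠ 0)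
    (m : Fin n → ZMod p) :
    ‖∑ l : Fin n → ZMod p,
        Complex.exp (2 * Real.pi * Complex.I / p) ^
          (dotProduct l (S.mulVec l) + dotProduct m l).val‖
      = Real.sqrt (p ^ n) := by
  have : NeZero p := ⟨hp.out.ne_zero⟩
  have hζ := Complex.isPrimitiveRoot_exp p hp.out.ne_zero
  have h2 : (2 : ZMod p) ≠ 0 := by
    exact_mod_cast (ZMod.natCast_eq_zero_iff 2 p).not.mpr (Nat.not_dvd_of_pos_of_lt two_pos hp3)
  have hunit : IsUnit (S + Sᵀ).det := by
    rw [hS.eq, ← two_smul (ZMod p), det_smul]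
    exact isUnit_iff_ne_zero.mpr (mul_ne_zero (pow_ne_zero _ h2) hdet)
  have hsq := AddChar.norm_sum_quadratic_sq
    (AddChar.zmodChar_primitive_of_primitive_root p hζ) hunit m
  rw [ZMod.card, Fintype.card_fin] at hsq
  rw [← hsq, Real.sqrt_sq (norm_nonneg _)]
  rfl
end

section
/- For an invertible symmetric n×n matrix S over Z_2, the absolute value of ∑_{l ∈ Z_2^n} i^(lᵀ S l) · (−1)^(mᵀ l) equals √(2^n) for any m ∈ Z_2^n, where lᵀ S l is computed with the entries of l and S lifted to integers. -/
/-!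
Put `f l = i ^ (lᵀ S l) * (-1) ^ (m · l)`, everything lifted to integers. Lifting from `ZMod 2` is
additive up to even corrections, and for symmetric `S` these contribute multiples of `4` to the
quadratic form, so `f (l + d) = f l * f d * (-1) ^ (lᵀ S d)`. Substituting `l' = l + d` in
`‖∑ f‖² = ∑ conj (f l) * f l'` leaves `∑_d f d * ∑_l (-1) ^ (lᵀ S d)`; the inner character sum vanishes
unless `S d = 0`, that is unless `d = 0`, so `‖∑ f‖² = ‖f 0‖ * 2 ^ n = 2 ^ n`.
-/

open Finset Matrix ComplexConjugate

theorem pow_eq_pow_of_natCast_eq {M : Type*} [Monoid M] {x : M} {N a b : ℕ} (hx : x ^ N = 1)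
    (h : (a : ZMod N) = b) : x ^ a = x ^ b := by
  rw [pow_eq_pow_mod a hx, pow_eq_pow_mod b hx, (ZMod.natCast_eq_natCast_iff' a b N).mp h]

theorem norm_sum_sq_eq_card_of_map_add {V : Type*} [AddCommGroup V] [Fintype V]
    (f : V → ℂ) (χ : V → AddChar V ℂ) (hf : ∀ v, ‖f v‖ = 1)
    (hadd : ∀ l d, f (l + d) = f l * f d * χ d l) (hχ : ∀ d, χ d = 0 ↔ d = 0) :
    ‖∑ v, f v‖ ^ 2 = Fintype.card V := by
  classical
  have hconj (l : V) : conj (f l) * f l = 1 := by simp [Complex.conj_mul', hf]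
  have hsum : (‖∑ v, f v‖ ^ 2 : ℂ) = f 0 * Fintype.card V :=
    calc (‖∑ v, f v‖ ^ 2 : ℂ)
        = ∑ l, ∑ d, conj (f l) * f (l + d) := by
          rw [← Complex.conj_mul', map_sum, sum_mul_sum]
          exact sum_congr rfl fun l _ => (Equiv.sum_comp (Equiv.addLeft l) _).symm
      _ = ∑ d, f d * ∑ l, χ d l := by
          simp_rw [hadd, mul_sum]
          rw [sum_comm]
          refine sum_congr rfl fun d _ => sum_congr rfl fun l _ => ?_
          linear_combination f d * χ d l * hconj l
      _ = f 0 * Fintype.card V := by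
          simp [AddChar.sum_eq_ite, hχ]
  simpa [hf] using congrArg norm hsum

section SignChar

variable {ι : Type*} [Fintype ι]

def signChar (v : ι → ZMod 2) : AddChar (ι → ZMod 2) ℂ where
  toFun l := (-1) ^ ∑ i, (v i).val * (l i).val
  map_zero_eq_one' := by simp
  map_add_eq_mul' l d := by
    rw [← pow_add]
    refine pow_eq_pow_of_natCast_eq (N := 2) (by norm_num) ?_
    simp [mul_add, sum_add_distrib]

theorem signChar_apply (v l : ι → ZMod 2) :
    signChar v l = (-1) ^ ∑ i, (v i).val * (l i).val := rfl

theorem signChar_eq_zero_iff (v : ι → ZMod 2) : signChar v = 0 ↔ v = 0 := by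
  classical
  refine ⟨fun h => funext fun i => ?_, fun h => by ext; simp [h, signChar_apply]⟩
  have hi := DFunLike.congr_fun h (Pi.single i 1)
  rw [signChar_apply, AddChar.zero_apply] at hi
  simp only [Pi.single_apply, apply_ite ZMod.val, ZMod.val_one, ZMod.val_zero, mul_ite, mul_one,
    mul_zero, sum_ite_eq', mem_univ, if_true] at hi
  rw [neg_one_pow_eq_one_iff_even (by norm_num)] at hi
  rw [Pi.zero_apply, ← ZMod.val_eq_zero]
  have := ZMod.val_lt (v i)
  grind

end SignChar

section LiftedForm

variable {ι : Type*} [Fintype ι] (S : Matrix ι ι (ZMod 2))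

def liftBilin (l d : ι → ZMod 2) : ℕ := ∑ i, ∑ j, (l i).val * (S i j).val * (d j).val

theorem liftBilin_comm (hS : S.IsSymm) (l d : ι → ZMod 2) :
    liftBilin S l d = liftBilin S d l := by
  rw [liftBilin, liftBilin, sum_comm]
  refine sum_congr rfl fun i _ => sum_congr rfl fun j _ => ?_
  rw [hS.apply i j]
  ring

theorem neg_one_pow_liftBilin (l d : ι → ZMod 2) :
    (-1 : ℂ) ^ liftBilin S l d = signChar (S *ᵥ d) l := by
  refine pow_eq_pow_of_natCast_eq (N := 2) (by norm_num) ?_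
  simp [liftBilin, mulVec, dotProduct, mul_sum, mul_assoc, mul_comm, mul_left_comm]

theorem zmod_two_val_mul (x y : ZMod 2) : (x * y).val = x.val * y.val := by
  fin_cases x <;> fin_cases y <;> rfl

theorem zmod_two_natCast_val_add (x y : ZMod 2) :
    ((x + y).val : ZMod 4) = x.val + y.val - 2 * (x * y).val := by
  fin_cases x <;> fin_cases y <;> rfl

theorem natCast_liftBilin_add_self (hS : S.IsSymm) (l d : ι → ZMod 2) :
    (liftBilin S (l + d) (l + d) : ZMod 4)
      = liftBilin S l l + liftBilin S d d + 2 * liftBilin S l d := by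
  have hexp : (liftBilin S (l + d) (l + d) : ZMod 4)
      = liftBilin S l l + liftBilin S d d + liftBilin S l d + liftBilin S d l
        - 2 * (liftBilin S l (l * d) + liftBilin S (l * d) l
          + liftBilin S d (l * d) + liftBilin S (l * d) d)
        + 4 * liftBilin S (l * d) (l * d) := by
    simp only [liftBilin, Nat.cast_sum, Nat.cast_mul, mul_sum, ← sum_add_distrib,
      ← sum_sub_distrib]
    refine sum_congr rfl fun i _ => sum_congr rfl fun j _ => ?_
    simp only [Pi.add_apply, Pi.mul_apply, zmod_two_natCast_val_add, zmod_two_val_mul, Nat.cast_mul]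
    ring
  -- by symmetry the correction terms pair up into multiples of `4`
  have h4 : (4 : ZMod 4) = 0 := rfl
  rw [hexp, liftBilin_comm S hS d l, liftBilin_comm S hS l (l * d),
    liftBilin_comm S hS d (l * d)]
  linear_combination (liftBilin S (l * d) (l * d) - liftBilin S (l * d) l
    - liftBilin S (l * d) d : ZMod 4) * h4

theorem I_pow_liftBilin_add_self (hS : S.IsSymm) (l d : ι → ZMod 2) :
    Complex.I ^ liftBilin S (l + d) (l + d)
      = Complex.I ^ liftBilin S l l * Complex.I ^ liftBilin S d d * signChar (S *ᵥ d) l := by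
  rw [← neg_one_pow_liftBilin, ← Complex.I_sq, ← pow_mul, ← pow_add, ← pow_add]
  refine pow_eq_pow_of_natCast_eq Complex.I_pow_four ?_
  push_cast
  exact natCast_liftBilin_add_self S hS l d

end LiftedForm

theorem weil_sum_abs_two (n : ℕ)
    (S : Matrix (Fin n) (Fin n) (ZMod 2)) (hS : S.IsSymm) (hdet : S.det ≠ 0)
    (m : Fin n → ZMod 2) :
    ‖(∑ l : Fin n → ZMod 2,
        Complex.I ^ (∑ i : Fin n, ∑ j : Fin n, (l i).val * (S i j).val * (l j).val)
          * (-1 : ℂ) ^ (∑ i : Fin n, (m i).val * (l i).val))‖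
      = Real.sqrt (2 ^ n) := by
  have hinj : Function.Injective S.mulVec :=
    mulVec_injective_iff_isUnit.mpr ((isUnit_iff_isUnit_det S).mpr hdet.isUnit)
  have hsq := norm_sum_sq_eq_card_of_map_add (fun l => Complex.I ^ liftBilin S l l * signChar m l)
    (fun d => signChar (S *ᵥ d)) (fun l => by simp [signChar_apply])
    (fun l d => by
      simp only [I_pow_liftBilin_add_self S hS, AddChar.map_add_eq_mul]
      ring)
    (fun d => by rw [signChar_eq_zero_iff, hinj.eq_iff' (mulVec_zero S)])
  change ‖∑ l, Complex.I ^ liftBilin S l l * signChar m l‖ = _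
  rw [← Real.sqrt_sq (norm_nonneg _), hsq]
  simp
end
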